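/- arXiv:1810.08400 — 2 statements merged into one kernel-verified Lean document; each statement's English description precedes it below -/
import Mathlib

section
/- Let μ and ν be finite vector-valued (ℝ^d-valued) Borel measures on a compact set Ω ⊂ ℝ^d. If ‖μ‖ = ‖ν‖ + ‖μ − ν‖ (equality of total variation norms) and |μ| = |ν| + |μ − ν| as measures, then there exists a Borel measurable function λ : Ω → [0,1] with ν = λ·μ, i.e. ν(A) = ∫_A λ d μ for every Borel set A. -/
open MeasureTheory

/-- We represent the finite vector measures `μ, ν` on the compact set
`Ω ⊂ ℝ^d` by their densities `f, g` with respect to a common finite Borel measure `σ`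
(e.g. `σ = |μ| + |ν|`), so that `μ(A) = ∫_A f dσ`, `ν(A) = ∫_A g dσ`, the total variation
measures are `|μ| = σ.withDensity ‖f‖`, `|ν| = σ.withDensity ‖g‖`,
`|μ - ν| = σ.withDensity ‖f - g‖`, and the total variation norms are the corresponding
total masses. The hypothesis `|μ| = |ν| + |μ - ν|` (which entails
`‖μ‖ = ‖ν‖ + ‖μ - ν‖`) yields a Borel function `λ : Ω → [0,1]` with `ν = λ·μ`,
i.e. the density of `ν` equals `λ` times the density of `μ` (σ-a.e.), so that
`ν(A) = ∫_A λ dμ` for every Borel set `A`. -/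
theorem stmt_4 {d : ℕ} {Ω : Set (EuclideanSpace ℝ (Fin d))} (hΩ : IsCompact Ω)
    (σ : Measure Ω) [IsFiniteMeasure σ]
    (f g : Ω → EuclideanSpace ℝ (Fin d))
    (hf : Integrable f σ) (hg : Integrable g σ)
    (hnorm : ∫ x, ‖f x‖ ∂σ = (∫ x, ‖g x‖ ∂σ) + ∫ x, ‖f x - g x‖ ∂σ)
    (hmeas : σ.withDensity (fun x => ENNReal.ofReal ‖f x‖)
      = σ.withDensity (fun x => ENNReal.ofReal ‖g x‖)
        + σ.withDensity (fun x => ENNReal.ofReal ‖f x - g x‖)) :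
    ∃ lam : Ω → ℝ, Measurable lam ∧ (∀ x, lam x ∈ Set.Icc (0 : ℝ) 1) ∧
      ∀ᵐ x ∂σ, g x = lam x • f x := by
  -- measurable representatives
  set f' := hf.1.mk f with hf'def
  set g' := hg.1.mk g with hg'def
  have hf'm : StronglyMeasurable f' := hf.1.stronglyMeasurable_mk
  have hg'm : StronglyMeasurable g' := hg.1.stronglyMeasurable_mk
  have hff' : f =ᵐ[σ] f' := hf.1.ae_eq_mk
  have hgg' : g =ᵐ[σ] g' := hg.1.ae_eq_mk
  -- the candidate density
  set lam : Ω → ℝ := fun x => min 1 (max 0 ((inner ℝ (g' x) (f' x) : ℝ) / ‖f' x‖ ^ 2))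
    with hlam
  have hmeas_lam : Measurable lam := by
    apply Measurable.min measurable_const
    apply Measurable.max measurable_const
    exact (Measurable.inner hg'm.measurable hf'm.measurable).div
      ((hf'm.measurable.norm).pow measurable_const)
  refine ⟨lam, hmeas_lam, fun x =>
    ⟨le_min (by norm_num) (le_max_left _ _), min_le_left _ _⟩, ?_⟩
  · -- a.e. pointwise equality of norms
    have hfg' : (fun x => f x - g x) =ᵐ[σ] fun x => f' x - g' x := by
      filter_upwards [hff', hgg'] with x h1 h2; rw [h1, h2]
    have hm1 : Measurable fun x => ENNReal.ofReal ‖f' x‖ :=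
      ENNReal.measurable_ofReal.comp hf'm.measurable.norm
    have hm2 : Measurable fun x => ENNReal.ofReal ‖g' x‖ :=
      ENNReal.measurable_ofReal.comp hg'm.measurable.norm
    have hm3 : Measurable fun x => ENNReal.ofReal ‖f' x - g' x‖ :=
      ENNReal.measurable_ofReal.comp (hf'm.measurable.sub hg'm.measurable).norm
    have hmeas' : σ.withDensity (fun x => ENNReal.ofReal ‖f' x‖)
        = σ.withDensity (fun x => ENNReal.ofReal ‖g' x‖ + ENNReal.ofReal ‖f' x - g' x‖) := by
      have hsplit : (fun x => ENNReal.ofReal ‖g' x‖ + ENNReal.ofReal ‖f' x - g' x‖)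
          = (fun x => ENNReal.ofReal ‖g' x‖) + (fun x => ENNReal.ofReal ‖f' x - g' x‖) := rfl
      rw [hsplit, withDensity_add_right _ hm3]
      rw [withDensity_congr_ae (g := fun x => ENNReal.ofReal ‖f x‖)
        (hff'.mono fun x h => by simp only [h]),
        withDensity_congr_ae (f := fun x => ENNReal.ofReal ‖g' x‖)
          (g := fun x => ENNReal.ofReal ‖g x‖) (hgg'.mono fun x h => by simp only [h]),
        withDensity_congr_ae (f := fun x => ENNReal.ofReal ‖f' x - g' x‖)
          (g := fun x => ENNReal.ofReal ‖f x - g x‖) (hfg'.mono fun x h => by simp only [h])]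
      exact hmeas
    have hfin : ∫⁻ x, ENNReal.ofReal ‖f' x‖ ∂σ ≠ ⊤ := by
      rw [lintegral_congr_ae (hff'.mono fun x h => by simp only [h] :
        (fun x => ENNReal.ofReal ‖f' x‖) =ᵐ[σ] fun x => ENNReal.ofReal ‖f x‖)]
      simp_rw [ofReal_norm_eq_enorm]
      exact hf.2.ne
    have hae := (withDensity_eq_iff hm1.aemeasurable (hm2.add hm3).aemeasurable hfin).mp hmeas'
    filter_upwards [hae, hff', hgg'] with x hx hfx hgx
    rw [hfx, hgx]
    have hx' : ‖f' x‖ = ‖g' x‖ + ‖f' x - g' x‖ := by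
      rw [Pi.add_apply] at hx
      rw [← ENNReal.ofReal_add (norm_nonneg _) (norm_nonneg _)] at hx
      exact (ENNReal.ofReal_eq_ofReal_iff (norm_nonneg _) (by positivity)).mp hx
    have hray : SameRay ℝ (g' x) (f' x - g' x) := by
      rw [sameRay_iff_norm_add]
      rw [show g' x + (f' x - g' x) = f' x by abel]
      exact hx'.symm ▸ hx'.symm ▸ hx'
    obtain ⟨a, b, ha0, hb0, hab, hga, -⟩ := hray.exists_eq_smul_add
    rw [show g' x + (f' x - g' x) = f' x by abel] at hga
    have ha1 : a ≤ 1 := by linarith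
    by_cases hf0 : f' x = 0
    · rw [hga, hf0]; simp
    · have hinner : (inner ℝ (g' x) (f' x) : ℝ) / ‖f' x‖ ^ 2 = a := by
        have hn : (‖f' x‖ : ℝ) ^ 2 ≠ 0 := pow_ne_zero _ (norm_ne_zero_iff.mpr hf0)
        rw [hga, real_inner_smul_left, real_inner_self_eq_norm_sq]
        exact mul_div_cancel_right₀ a hn
      have : lam x = a := by
        rw [hlam]
        simp only [hinner, max_eq_right ha0, min_eq_right ha1]
      rw [this, hga]
end

section
/- Let γ : [0,1] → ℝ^d be Lipschitz, Σ ⊂ ℝ^d a Borel set with H^1(γ([0,1]) \ Σ) = 0, let n ∈ ℕ and G_n the rectilinear grid of width 1/n. Define A^γ = { x ∈ ℝ^d : γ([0,1]) ∩ (x + G_n) ⊄ Σ }. Then the d-dimensional Lebesgue measure of A^γ is zero. -/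
open MeasureTheory
open scoped ENNReal

/-- The rectilinear grid of width `1/n` in `ℝ^d`. -/
def grid (d n : ℕ) : Set (EuclideanSpace ℝ (Fin d)) :=
  {y | ∃ i : Fin d, ∃ m : ℤ, y i = (m : ℝ) / n}

/-- Coordinate projections on Euclidean space are 1-Lipschitz. -/
lemma eval_lipschitz {d : ℕ} (i : Fin d) :
    LipschitzWith 1 (fun p : EuclideanSpace ℝ (Fin d) => p i) := by
  apply LipschitzWith.of_dist_le_mul
  intro x y
  rw [NNReal.coe_one, one_mul, EuclideanSpace.dist_eq]
  have h1 : dist (x i) (y i) = Real.sqrt ((dist (x i) (y i)) ^ 2) :=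
    (Real.sqrt_sq dist_nonneg).symm
  rw [h1]
  apply Real.sqrt_le_sqrt
  exact Finset.single_le_sum (f := fun j => dist (x j) (y j) ^ 2)
    (fun j _ => sq_nonneg _) (Finset.mem_univ i)

/-- Preimage of a Lebesgue-null subset of `ℝ` under a coordinate projection is null. -/
lemma eval_preimage_null {d : ℕ} (i : Fin d) {U : Set ℝ} (hU : volume U = 0) :
    volume ((fun p : EuclideanSpace ℝ (Fin d) => p i) ⁻¹' U) = 0 := by
  obtain ⟨U', hUU', hU'meas, hU'0⟩ := exists_measurable_superset_of_null hU
  have hsub : (fun p : EuclideanSpace ℝ (Fin d) => p i) ⁻¹' U ⊆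
      (fun p : EuclideanSpace ℝ (Fin d) => p i) ⁻¹' U' :=
    Set.preimage_mono hUU'
  refine measure_mono_null hsub ?_
  have he := EuclideanSpace.volume_preserving_symm_measurableEquiv_toLp (Fin d)
  have key : (fun p : EuclideanSpace ℝ (Fin d) => p i) ⁻¹' U' =
      (MeasurableEquiv.toLp 2 (Fin d → ℝ)).symm ⁻¹' (Function.eval i ⁻¹' U') := rfl
  rw [key, he.measure_preimage
    ((hU'meas.preimage (measurable_pi_apply i)).nullMeasurableSet)]
  have : (volume : Measure (Fin d → ℝ)) = Measure.pi fun _ => volume := volume_pi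
  rw [this]
  exact Measure.pi_eval_preimage_null (fun _ => volume) hU'0

/-- If a Lipschitz curve `γ : [0,1] → ℝ^d` lies `H¹`-a.e. in a Borel set
`Σ`, then for Lebesgue-a.e. translation `x`, all points of the curve on the translated grid
`x + G_n` belong to `Σ`; i.e. the exceptional set `A^γ` is Lebesgue-null. -/
theorem stmt_11 {d : ℕ} (γ : ℝ → EuclideanSpace ℝ (Fin d)) (K : NNReal)
    (hγ : LipschitzOnWith K γ (Set.Icc 0 1))
    (S : Set (EuclideanSpace ℝ (Fin d))) (hS : MeasurableSet S)
    (hcov : μH[1] (γ '' Set.Icc 0 1 \ S) = 0)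
    (n : ℕ) (hn : 0 < n) :
    volume {x : EuclideanSpace ℝ (Fin d) |
      ¬ (γ '' Set.Icc 0 1 ∩ ((x + ·) '' grid d n) ⊆ S)} = 0 := by
  set N : Set (EuclideanSpace ℝ (Fin d)) := γ '' Set.Icc 0 1 \ S with hNdef
  -- projections of N are Lebesgue-null in ℝ
  have hproj : ∀ i : Fin d,
      volume ((fun p : EuclideanSpace ℝ (Fin d) => p i) '' N) = 0 := by
    intro i
    rw [← MeasureTheory.hausdorffMeasure_real]
    have h := (eval_lipschitz i).hausdorffMeasure_image_le (d := 1) zero_le_one N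
    rw [hcov] at h
    simpa using h
  -- the bad set is covered by a countable union of null sets
  have hcover : {x : EuclideanSpace ℝ (Fin d) |
      ¬ (γ '' Set.Icc 0 1 ∩ ((x + ·) '' grid d n) ⊆ S)} ⊆
      ⋃ i : Fin d, ⋃ m : ℤ,
        (fun p : EuclideanSpace ℝ (Fin d) => p i) ⁻¹'
          ((· + (m : ℝ) / n) ⁻¹' ((fun p : EuclideanSpace ℝ (Fin d) => p i) '' N)) := by
    intro x hx
    obtain ⟨p, ⟨hp1, hp2⟩, hps⟩ := Set.not_subset.mp hx
    obtain ⟨g, hg, rfl⟩ := hp2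
    obtain ⟨i, m, hgi⟩ := hg
    refine Set.mem_iUnion.mpr ⟨i, Set.mem_iUnion.mpr ⟨m, ?_⟩⟩
    refine ⟨x + g, ⟨hp1, hps⟩, ?_⟩
    show (x + g) i = x i + (m : ℝ) / n
    have : (x + g) i = x i + g i := rfl
    rw [this, hgi]
  refine measure_mono_null hcover ?_
  refine measure_iUnion_null fun i => measure_iUnion_null fun m => ?_
  apply eval_preimage_null
  rw [measure_preimage_add_right]
  exact hproj i
end
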